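/- arXiv:2002.02230 — 2 statements merged into one kernel-verified Lean document; each statement's English description precedes it below -/
import Mathlib

section
/- Let H be a complex Hilbert space and let B ∈ B₊(H). Then every A ∈ B₊(H) is B-absolutely continuous (A ≪ B for all A ∈ B₊(H)) if and only if B is invertible (i.e., B has a bounded inverse). -/
open ContinuousLinearMap Filter Topology

variable {H : Type} [NormedAddCommGroup H] [InnerProductSpace ℂ H] [CompleteSpace H]

/-- The Loewner order on bounded operators: `A ≤ B` iff `B - A` is positive. -/
def Loewner (A B : H →L[ℂ] H) : Prop := (B - A).IsPositive

/-- `A` is `B`-absolutely continuous: `A` is the strong-operator-topology limit of a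
monotone increasing sequence of positive operators, each dominated by a nonnegative
multiple of `B`. -/
def AbsCont (A B : H →L[ℂ] H) : Prop :=
  ∃ f : ℕ → H →L[ℂ] H,
    (∀ n, (f n).IsPositive) ∧
    (∀ m n, m ≤ n → Loewner (f m) (f n)) ∧
    (∀ n, ∃ c : ℝ, 0 ≤ c ∧ Loewner (f n) (c • B)) ∧
    (∀ x : H, Tendsto (fun n => f n x) atTop (𝓝 (A x)))

/-- `A` and `B` are singular: the only positive operator below both (in the Loewner
order) is `0`. -/
def Singular (A B : H →L[ℂ] H) : Prop :=
  ∀ C : H →L[ℂ] H, C.IsPositive → Loewner C A → Loewner C B → C = 0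

/-- An operator range: a subspace which is the range of some bounded operator. -/
def IsOpRange (M : Submodule ℂ H) : Prop := ∃ S : H →L[ℂ] H, LinearMap.range (S : H →ₗ[ℂ] H) = M

/-!
If `B` is invertible it dominates a multiple of every positive operator, so constant sequences
witness `A ≪ B`. Conversely, apply the hypothesis to the rank-one operator `P = ⟪x, ·⟫ x`. An
operator `0 ≤ F ≤ P` kills `x^⊥`, so its quadratic form is a multiple of that of `P`; as the
approximants converge to `P`, one of them is a positive multiple, whence
`‖⟪x, y⟫‖² ≤ c_x ⟪B y, y⟫` for all `y`. The uniform boundedness principle, applied to the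
functionals `⟪y, ·⟫` with `⟪B y, y⟫ ≤ 1`, bounds these `y` in norm, i.e. `‖y‖² ≤ C ⟪B y, y⟫`:
`B` is bounded below, hence invertible.
-/

open InnerProductSpace RCLike
open scoped ComplexOrder

namespace ContinuousLinearMap

section RCLike

variable {𝕜 E : Type*} [RCLike 𝕜] [NormedAddCommGroup E] [InnerProductSpace 𝕜 E]

lemma inner_map_self_le_of_le {f g : E →L[𝕜] E} (h : f ≤ g) (x : E) :
    ⟪f x, x⟫_𝕜 ≤ ⟪g x, x⟫_𝕜 := by
  simpa [inner_sub_left] using h.inner_nonneg_left x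

lemma le_of_monotone_of_tendsto_apply {f : ℕ → E →L[𝕜] E} {A : E →L[𝕜] E} (hf : Monotone f)
    (hA : ∀ x, Tendsto (fun m => f m x) atTop (𝓝 (A x))) (n : ℕ) : f n ≤ A := by
  have hlim : ∀ x y, Tendsto (fun m => ⟪(f m - f n) x, y⟫_𝕜) atTop (𝓝 ⟪(A - f n) x, y⟫_𝕜) :=
    fun x y => ((hA x).sub tendsto_const_nhds).inner tendsto_const_nhds
  refine (isPositive_iff _).2 ⟨fun x y => ?_, fun x => ge_of_tendsto (hlim x x) ?_⟩
  · have hsymm : ∀ᶠ m in atTop, ⟪(f m - f n) x, y⟫_𝕜 = ⟪x, (f m - f n) y⟫_𝕜 :=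
      (eventually_ge_atTop n).mono fun m hm => (hf hm).isSymmetric x y
    exact tendsto_nhds_unique ((hlim x y).congr' hsymm)
      (tendsto_const_nhds.inner ((hA y).sub tendsto_const_nhds))
  · filter_upwards [eventually_ge_atTop n] with m hm
    exact (hf hm).inner_nonneg_left x

lemma norm_sq_le_of_forall_reApplyInnerSelf_le_one (T : E →L[𝕜] E) {C : ℝ}
    (h : ∀ y, T.reApplyInnerSelf y ≤ 1 → ‖y‖ ≤ C) (y : E) :
    ‖y‖ ^ 2 ≤ C ^ 2 * T.reApplyInnerSelf y := by
  have hscale : ∀ t : ℝ, 0 < t → t ^ 2 * T.reApplyInnerSelf y ≤ 1 → t * ‖y‖ ≤ C := by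
    intro t ht hty
    have := h ((t : 𝕜) • y) (by rwa [reApplyInnerSelf_smul, norm_ofReal, abs_of_pos ht])
    rwa [norm_smul, norm_ofReal, abs_of_pos ht] at this
  have hC : 0 ≤ C := (norm_nonneg _).trans (h 0 (by simp [reApplyInnerSelf_apply]))
  rcases le_or_gt (T.reApplyInnerSelf y) 0 with hq | hq
  · obtain rfl : y = 0 := by
      by_contra hy
      have hy' : 0 < ‖y‖ := norm_pos_iff.2 hy
      have := hscale ((C + 1) / ‖y‖) (by positivity) (by nlinarith [sq_nonneg ((C + 1) / ‖y‖)])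
      rw [div_mul_cancel₀ _ hy'.ne'] at this
      linarith
    simp [reApplyInnerSelf_apply]
  · have hs : 0 < √(T.reApplyInnerSelf y) := Real.sqrt_pos.2 hq
    have := hscale (√(T.reApplyInnerSelf y))⁻¹ (by positivity) (by
      rw [inv_pow, Real.sq_sqrt hq.le, inv_mul_cancel₀ hq.ne'])
    rw [inv_mul_le_iff₀ hs] at this
    calc ‖y‖ ^ 2 ≤ (√(T.reApplyInnerSelf y) * C) ^ 2 := by gcongr
      _ = C ^ 2 * T.reApplyInnerSelf y := by rw [mul_pow, Real.sq_sqrt hq.le, mul_comm]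

lemma isUnit_of_norm_sq_le_reApplyInnerSelf [CompleteSpace E] (T : E →L[𝕜] E) {C : ℝ}
    (h : ∀ y, ‖y‖ ^ 2 ≤ C * T.reApplyInnerSelf y) : IsUnit T := by
  refine isUnit_of_forall_le_norm_inner_map T (c := (‖C‖₊ + 1)⁻¹) (by positivity) fun y => ?_
  push_cast [coe_nnnorm, Real.norm_eq_abs]
  rw [mul_inv_le_iff₀ (by positivity)]
  calc ‖y‖ ^ 2 ≤ C * re ⟪T y, y⟫_𝕜 := h y
    _ ≤ |C| * ‖⟪T y, y⟫_𝕜‖ :=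
      (le_abs_self _).trans (by rw [abs_mul]; gcongr; exact abs_re_le_norm _)
    _ ≤ ‖⟪T y, y⟫_𝕜‖ * (|C| + 1) := by nlinarith [norm_nonneg ⟪T y, y⟫_𝕜]

lemma isUnit_of_forall_norm_inner_sq_le [CompleteSpace E] {B : E →L[𝕜] E} (hB : B.IsPositive)
    (h : ∀ x, ∃ c, ∀ y, ‖⟪x, y⟫_𝕜‖ ^ 2 ≤ c * B.reApplyInnerSelf y) : IsUnit B := by
  let g : {y : E // B.reApplyInnerSelf y ≤ 1} → E →L[𝕜] 𝕜 := fun y => innerSL 𝕜 (y : E)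
  obtain ⟨C, hC⟩ := banach_steinhaus (g := g) fun x => by
    obtain ⟨c, hc⟩ := h x
    refine ⟨√|c|, fun ⟨y, hy⟩ => ?_⟩
    have hcy : c * B.reApplyInnerSelf y ≤ |c| :=
      calc c * B.reApplyInnerSelf y ≤ |c| * B.reApplyInnerSelf y := by
            gcongr
            · exact hB.re_inner_nonneg_left y
            · exact le_abs_self c
        _ ≤ |c| := mul_le_of_le_one_right (abs_nonneg c) hy
    rw [show g ⟨y, hy⟩ x = ⟪y, x⟫_𝕜 from rfl, norm_inner_symm]
    exact (le_abs_self _).trans (Real.abs_le_sqrt ((hc y).trans hcy))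
  exact isUnit_of_norm_sq_le_reApplyInnerSelf B
    (norm_sq_le_of_forall_reApplyInnerSelf_le_one B fun y hy => by
      simpa [g, innerSL_apply_norm] using hC ⟨y, hy⟩)

end RCLike

section Complex

variable {E : Type*} [NormedAddCommGroup E] [InnerProductSpace ℂ E] [CompleteSpace E]

lemma IsPositive.apply_eq_zero_of_inner_eq_zero {T : E →L[ℂ] E} (hT : T.IsPositive) {w : E}
    (hw : ⟪T w, w⟫_ℂ = 0) : T w = 0 := by
  obtain ⟨S, hS, rfl⟩ : ∃ S : E →L[ℂ] E, IsSelfAdjoint S ∧ S * S = T :=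
    ⟨CFC.sqrt T, (CFC.sqrt_nonneg T).isSelfAdjoint,
      CFC.sqrt_mul_sqrt_self T ((nonneg_iff_isPositive T).2 hT)⟩
  have hSw : S w = 0 := by
    rw [← inner_self_eq_zero (𝕜 := ℂ), ← hw]
    exact (hS.isSymmetric _ _).symm
  change S (S w) = 0
  rw [hSw, map_zero]

lemma inner_self_smul_apply_eq_of_le_rankOne {f : E →L[ℂ] E} {x : E} (hf : f.IsPositive)
    (hfx : f ≤ rankOne ℂ x x) (y : E) : ⟪x, x⟫_ℂ • f y = ⟪x, y⟫_ℂ • f x := by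
  have hker : ∀ w, ⟪x, w⟫_ℂ = 0 → f w = 0 := fun w hw =>
    hf.apply_eq_zero_of_inner_eq_zero <| le_antisymm
      (by simpa [hw] using inner_map_self_le_of_le hfx w) (hf.inner_nonneg_left w)
  have := hker (⟪x, x⟫_ℂ • y - ⟪x, y⟫_ℂ • x) (by simp [mul_comm])
  rwa [map_sub, map_smul, map_smul, sub_eq_zero] at this

lemma norm_pow_four_mul_reApplyInnerSelf_eq_of_le_rankOne {f : E →L[ℂ] E} {x : E}
    (hf : f.IsPositive) (hfx : f ≤ rankOne ℂ x x) (y : E) :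
    ‖x‖ ^ 4 * f.reApplyInnerSelf y = ‖⟪x, y⟫_ℂ‖ ^ 2 * f.reApplyInnerSelf x := by
  have h := inner_self_smul_apply_eq_of_le_rankOne hf hfx
  have hc : ⟪x, x⟫_ℂ ^ 2 * ⟪f y, y⟫_ℂ = (‖⟪x, y⟫_ℂ‖ : ℂ) ^ 2 * ⟪f x, x⟫_ℂ :=
    calc ⟪x, x⟫_ℂ ^ 2 * ⟪f y, y⟫_ℂ = ⟪⟪x, x⟫_ℂ • f y, ⟪x, x⟫_ℂ • y⟫_ℂ := by
          rw [inner_smul_left, inner_smul_right, inner_conj_symm]; ring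
      _ = starRingEnd ℂ ⟪x, y⟫_ℂ * ⟪x, f (⟪x, x⟫_ℂ • y)⟫_ℂ := by
          rw [h, inner_smul_left, hf.inner_left_eq_inner_right]
      _ = (‖⟪x, y⟫_ℂ‖ : ℂ) ^ 2 * ⟪f x, x⟫_ℂ := by
          rw [map_smul, h, inner_smul_right, ← mul_assoc, Complex.conj_mul',
            hf.inner_left_eq_inner_right]
  rw [inner_self_eq_norm_sq_to_K, ← pow_mul] at hc
  simpa [reApplyInnerSelf_apply, ← Complex.ofReal_pow] using congrArg Complex.re hc

end Complex

end ContinuousLinearMap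

lemma IsStrictlyPositive.exists_le_smul {A : Type*} [CStarAlgebra A] [PartialOrder A]
    [StarOrderedRing A] {a b : A} (hb : IsStrictlyPositive b) (ha : IsSelfAdjoint a) :
    ∃ c : ℝ, 0 ≤ c ∧ a ≤ c • b := by
  rcases subsingleton_or_nontrivial A with hA | hA
  · exact ⟨0, le_rfl, (Subsingleton.elim _ _).le⟩
  obtain ⟨r, hr, hrb⟩ :=
    (CFC.exists_pos_algebraMap_le_iff hb.isSelfAdjoint).2 fun x hx => hb.spectrum_pos hx
  refine ⟨‖a‖ / r, by positivity, ?_⟩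
  calc a ≤ algebraMap ℝ A ‖a‖ := ha.le_algebraMap_norm_self
    _ = (‖a‖ / r) • algebraMap ℝ A r := by
      rw [Algebra.smul_def, ← map_mul, div_mul_cancel₀ _ hr.ne']
    _ ≤ (‖a‖ / r) • b := smul_le_smul_of_nonneg_left hrb (by positivity)

lemma absCont_of_le_smul {E : Type} [NormedAddCommGroup E] [InnerProductSpace ℂ E]
    {A B : E →L[ℂ] E} (hA : A.IsPositive) {c : ℝ} (hc : 0 ≤ c) (hAB : A ≤ c • B) :
    AbsCont A B :=
  ⟨fun _ => A, fun _ => hA, fun _ _ _ => (le_rfl : A ≤ A), fun _ => ⟨c, hc, hAB⟩,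
    fun _ => tendsto_const_nhds⟩

lemma exists_norm_inner_sq_le_of_absCont_rankOne {E : Type} [NormedAddCommGroup E]
    [InnerProductSpace ℂ E] [CompleteSpace E] {B : E →L[ℂ] E} {x : E}
    (h : AbsCont (rankOne ℂ x x) B) :
    ∃ c, ∀ y, ‖⟪x, y⟫_ℂ‖ ^ 2 ≤ c * B.reApplyInnerSelf y := by
  obtain ⟨f, hf, hmono, hdom, hlim⟩ := h
  rcases eq_or_ne x 0 with rfl | hx
  · exact ⟨0, by simp⟩
  have hfP : ∀ n, f n ≤ rankOne ℂ x x := le_of_monotone_of_tendsto_apply hmono hlim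
  have hPx : (rankOne ℂ x x).reApplyInnerSelf x = ‖x‖ ^ 4 := by
    simp [reApplyInnerSelf_apply, ← Complex.ofReal_pow]; ring
  have hfx : Tendsto (fun n => (f n).reApplyInnerSelf x) atTop (𝓝 (‖x‖ ^ 4)) :=
    hPx ▸ (Complex.continuous_re.tendsto _).comp ((hlim x).inner tendsto_const_nhds)
  obtain ⟨n, hn⟩ := (hfx.eventually (eventually_gt_nhds (by positivity))).exists
  obtain ⟨c, -, hc⟩ := hdom n
  refine ⟨‖x‖ ^ 4 * c / (f n).reApplyInnerSelf x, fun y => ?_⟩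
  have hfy : (f n).reApplyInnerSelf y ≤ c * B.reApplyInnerSelf y := by
    simpa [reApplyInnerSelf_apply] using re_le_re (inner_map_self_le_of_le hc y)
  rw [div_mul_eq_mul_div, le_div_iff₀ hn,
    ← norm_pow_four_mul_reApplyInnerSelf_eq_of_le_rankOne (hf n) (hfP n) y, mul_assoc]
  gcongr

/-- Every positive operator is `B`-absolutely continuous iff `B` is
invertible. -/
theorem stmt18 (B : H →L[ℂ] H) (hB : B.IsPositive) :
    (∀ A : H →L[ℂ] H, A.IsPositive → AbsCont A B) ↔ IsUnit B := by
  refine ⟨fun h => isUnit_of_forall_norm_inner_sq_le hB fun x => ?_, fun hU A hA => ?_⟩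
  · exact exists_norm_inner_sq_le_of_absCont_rankOne (h _ (isPositive_rankOne_self x))
  · obtain ⟨c, hc, hAB⟩ := (hU.isStrictlyPositive ((nonneg_iff_isPositive B).2 hB)).exists_le_smul
      hA.isSelfAdjoint
    exact absCont_of_le_smul hA hc hAB
end

section
/- Let H be a complex Hilbert space and let φ : B₊(H) → B₊(H) be a bijective map such that φ(A) = A for every non-invertible A ∈ B₊(H) and φ maps the set of invertible elements of B₊(H) onto itself. Then φ preserves absolute continuity in both directions, i.e., for all A, B ∈ B₊(H): A ≪ B if and only if φ(A) ≪ φ(B). -/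
open ContinuousLinearMap Filter Topology

variable {H : Type} [NormedAddCommGroup H] [InnerProductSpace ℂ H] [CompleteSpace H]

/-!
For positive `A`, `B`: if `B` is invertible then `A ≤ c • B` for some `c`, so `A ≪ B`; if `A` is
invertible then `A ≪ B` holds exactly when `B` is injective. For the latter, `A ≪ B` forces
`ker B ≤ ker A`, and conversely conjugation by `A ^ (1/2)` reduces to `1 ≪ T` with `T` positive
and injective, witnessed by `1 - (1 + n T)⁻¹ ≤ n T`, which increases strongly to `1` because
`(1 + n T)⁻¹` is bounded by `1` and is `O(1/n)` on the dense range of `T`.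
Since `φ` fixes non-invertible operators and keeps invertible ones invertible, in each of the
four cases (`A`, `B` invertible or not) both sides of the equivalence agree.
-/

lemma apply_eq_zero_of_re_inner_nonpos {T : H →L[ℂ] H} (hT : 0 ≤ T) {x : H}
    (h : RCLike.re (inner ℂ (T x) x) ≤ 0) : T x = 0 := by
  obtain ⟨S, rfl⟩ := CStarAlgebra.nonneg_iff_eq_star_mul_self.mp hT
  have hnorm : RCLike.re (inner ℂ ((star S * S) x) x) = ‖S x‖ ^ 2 := by
    rw [star_eq_adjoint, mul_apply_eq_comp, adjoint_inner_left, inner_self_eq_norm_sq]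
  have hSx : S x = 0 := by
    rw [← norm_eq_zero]; nlinarith [norm_nonneg (S x)]
  rw [mul_apply_eq_comp, hSx, map_zero]

lemma apply_eq_zero_of_le {f g : H →L[ℂ] H} (hf : 0 ≤ f) (hfg : f ≤ g) {x : H} (hx : g x = 0) :
    f x = 0 := by
  refine apply_eq_zero_of_re_inner_nonpos hf ?_
  have := hfg.re_inner_nonneg_left x
  simpa [hx, inner_neg_left] using this

lemma AbsCont.ker_le {A B : H →L[ℂ] H} (h : AbsCont A B) : B.ker ≤ A.ker := by
  obtain ⟨f, hpos, -, hbd, htend⟩ := h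
  intro x hx
  simp only [LinearMap.mem_ker, coe_coe] at hx ⊢
  have hfx : ∀ n, f n x = 0 := fun n => by
    obtain ⟨c, -, hle⟩ := hbd n
    exact apply_eq_zero_of_le ((nonneg_iff_isPositive _).mpr (hpos n)) hle (by simp [hx])
  have hzero : Tendsto (fun n => f n x) atTop (𝓝 0) := by
    simp only [hfx]; exact tendsto_const_nhds
  exact tendsto_nhds_unique (htend x) hzero

omit [CompleteSpace H] in
lemma absCont_of_le_smul_s19 {A B : H →L[ℂ] H} {c : ℝ} (hA : 0 ≤ A) (hc : 0 ≤ c) (h : A ≤ c • B) :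
    AbsCont A B :=
  ⟨fun _ => A, fun _ => (nonneg_iff_isPositive A).mp hA, fun _ _ _ => (le_refl A :),
    fun _ => ⟨c, hc, h⟩, fun _ => tendsto_const_nhds⟩

lemma absCont_of_isStrictlyPositive_right {A B : H →L[ℂ] H} (hA : 0 ≤ A)
    (hB : IsStrictlyPositive B) : AbsCont A B := by
  rcases subsingleton_or_nontrivial (H →L[ℂ] H) with _ | _
  · exact absCont_of_le_smul_s19 hA le_rfl (Subsingleton.elim A _).le
  obtain ⟨r, hr, hrB⟩ := (CFC.exists_pos_algebraMap_le_iff hB.isSelfAdjoint).mpr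
    fun x hx => hB.spectrum_pos hx
  refine absCont_of_le_smul_s19 hA (c := ‖A‖ / r) (by positivity) ?_
  calc A ≤ algebraMap ℝ (H →L[ℂ] H) ‖A‖ := IsSelfAdjoint.le_algebraMap_norm_self
    _ = (‖A‖ / r) • algebraMap ℝ (H →L[ℂ] H) r := by
        rw [Algebra.smul_def, ← map_mul, div_mul_cancel₀ _ hr.ne']
    _ ≤ (‖A‖ / r) • B := smul_le_smul_of_nonneg_left hrB (by positivity)

lemma AbsCont.star_left_conjugate {A B : H →L[ℂ] H} (h : AbsCont A B) (S : H →L[ℂ] H) :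
    AbsCont (star S * A * S) (star S * B * S) := by
  obtain ⟨f, hpos, hmono, hbd, htend⟩ := h
  refine ⟨fun n => star S * f n * S, fun n => ?_, fun m n hmn => ?_, fun n => ?_, fun x => ?_⟩
  · exact (nonneg_iff_isPositive _).mp
      (star_left_conjugate_nonneg ((nonneg_iff_isPositive _).mpr (hpos n)) S)
  · exact star_left_conjugate_le_conjugate (hmono m n hmn) S
  · obtain ⟨c, hc, hle⟩ := hbd n
    refine ⟨c, hc, ?_⟩
    have := star_left_conjugate_le_conjugate hle S
    rwa [mul_smul_comm, smul_mul_assoc] at this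
  · exact ((star S).continuous.tendsto _).comp (htend (S x))

lemma tendsto_apply_of_norm_le_of_dense {ι 𝕜 E F : Type*} [NontriviallyNormedField 𝕜]
    [SeminormedAddCommGroup E] [NormedSpace 𝕜 E] [SeminormedAddCommGroup F] [NormedSpace 𝕜 F]
    {l : Filter ι} {R : ι → E →L[𝕜] F} {C : ℝ} (hR : ∀ i, ‖R i‖ ≤ C) {s : Set E} (hs : Dense s)
    (h : ∀ y ∈ s, Tendsto (fun i => R i y) l (𝓝 0)) (x : E) :
    Tendsto (fun i => R i x) l (𝓝 0) := by
  have hequi : Equicontinuous fun i => (R i : E → F) :=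
    ((NormedSpace.equicontinuous_TFAE R).out 5 1).mp (⟨C, hR⟩ : ∃ C, ∀ i, ‖R i‖ ≤ C)
  have hclosed := hequi.isClosed_setOfPred_tendsto (l := l) (f := fun _ => (0 : F))
    continuous_const
  exact hclosed.closure_subset_iff.mpr h (hs x)

lemma IsSelfAdjoint.denseRange_of_injective {T : H →L[ℂ] H} (hT : IsSelfAdjoint T)
    (hinj : Function.Injective T) : DenseRange T := by
  have hker : LinearMap.ker (T : H →ₗ[ℂ] H) = ⊥ := LinearMap.ker_eq_bot.mpr hinj
  have := Submodule.dense_iff_topologicalClosure_eq_top.mpr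
    (Submodule.topologicalClosure_eq_top_iff.mpr (hT.isSymmetric.orthogonal_range.trans hker))
  rwa [LinearMap.coe_range, coe_coe] at this

lemma one_add_mul_pos_of_mem_spectrum {T : H →L[ℂ] H} (hT : 0 ≤ T) (n : ℕ) {t : ℝ}
    (ht : t ∈ spectrum ℝ T) : 0 < 1 + n * t := by
  have := spectrum_nonneg_of_nonneg hT ht
  positivity

lemma continuousOn_inv_one_add_mul_spectrum {T : H →L[ℂ] H} (hT : 0 ≤ T) (n : ℕ) :
    ContinuousOn (fun t : ℝ => (1 + n * t)⁻¹) (spectrum ℝ T) :=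
  ContinuousOn.inv₀ (by fun_prop) fun _ ht => (one_add_mul_pos_of_mem_spectrum hT n ht).ne'

lemma tendsto_cfc_inv_one_add_mul_apply {T : H →L[ℂ] H} (hT : 0 ≤ T)
    (hinj : Function.Injective T) (x : H) :
    Tendsto (fun n : ℕ => cfc (fun t : ℝ => (1 + n * t)⁻¹) T x) atTop (𝓝 0) := by
  have hspec : ∀ t ∈ spectrum ℝ T, 0 ≤ t := fun t ht => spectrum_nonneg_of_nonneg hT ht
  have hnorm : ∀ n : ℕ, ‖cfc (fun t : ℝ => (1 + n * t)⁻¹) T‖ ≤ 1 := fun n =>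
    norm_cfc_le zero_le_one fun t ht => by
      have := hspec t ht
      rw [Real.norm_eq_abs, abs_of_pos (by positivity)]
      exact inv_le_one_of_one_le₀ (by nlinarith [n.cast_nonneg (α := ℝ)])
  have hnormT : ∀ n : ℕ, 1 ≤ n → ‖cfc (fun t : ℝ => (1 + n * t)⁻¹) T * T‖ ≤ (n : ℝ)⁻¹ := by
    intro n hn
    have hn' : (1 : ℝ) ≤ n := by exact_mod_cast hn
    have hmul : cfc (fun t : ℝ => (1 + n * t)⁻¹) T * T = cfc (fun t : ℝ => (1 + n * t)⁻¹ * t) T := by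
      rw [cfc_mul _ _ T (continuousOn_inv_one_add_mul_spectrum hT n), cfc_id' ℝ T]
    rw [hmul]
    refine norm_cfc_le (by positivity) fun t ht => ?_
    have := hspec t ht
    rw [Real.norm_eq_abs, abs_of_nonneg (by positivity), inv_mul_eq_div,
      div_le_iff₀ (by positivity), mul_add, inv_mul_cancel_left₀ (by positivity)]
    linarith [inv_nonneg.mpr (n.cast_nonneg : (0 : ℝ) ≤ n)]
  refine tendsto_apply_of_norm_le_of_dense hnorm (hT.isSelfAdjoint.denseRange_of_injective hinj) ?_ x
  rintro _ ⟨z, rfl⟩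
  have hlim : Tendsto (fun n : ℕ => (n : ℝ)⁻¹ * ‖z‖) atTop (𝓝 0) := by
    simpa using tendsto_inv_atTop_nhds_zero_nat.mul_const ‖z‖
  refine squeeze_zero_norm' ?_ hlim
  filter_upwards [eventually_ge_atTop 1] with n hn
  calc ‖cfc (fun t : ℝ => (1 + n * t)⁻¹) T (T z)‖
      = ‖(cfc (fun t : ℝ => (1 + n * t)⁻¹) T * T) z‖ := rfl
    _ ≤ ‖cfc (fun t : ℝ => (1 + n * t)⁻¹) T * T‖ * ‖z‖ := le_opNorm _ _
    _ ≤ (n : ℝ)⁻¹ * ‖z‖ := by gcongr; exact hnormT n hn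

lemma absCont_one_of_injective {T : H →L[ℂ] H} (hT : 0 ≤ T) (hinj : Function.Injective T) :
    AbsCont 1 T := by
  have hspec : ∀ t ∈ spectrum ℝ T, 0 ≤ t := fun t ht => spectrum_nonneg_of_nonneg hT ht
  have hpos := one_add_mul_pos_of_mem_spectrum hT
  have hcont := continuousOn_inv_one_add_mul_spectrum hT
  let g (n : ℕ) : H →L[ℂ] H := cfc (fun t : ℝ => 1 - (1 + n * t)⁻¹) T
  refine ⟨g, fun n => (nonneg_iff_isPositive _).mp ?_, fun m n hmn => ?_,
    fun n => ⟨n, n.cast_nonneg, ?_⟩, fun x => ?_⟩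
  · refine cfc_nonneg fun t ht => sub_nonneg.mpr (inv_le_one_of_one_le₀ ?_)
    have := hspec t ht
    nlinarith [n.cast_nonneg (α := ℝ)]
  · show g m ≤ g n
    refine cfc_mono (fun t ht => sub_le_sub_left (inv_anti₀ (hpos m ht) ?_) 1)
      (continuousOn_const.sub (hcont m)) (continuousOn_const.sub (hcont n))
    have := hspec t ht
    have : (m : ℝ) ≤ n := by exact_mod_cast hmn
    nlinarith
  · show g n ≤ (n : ℝ) • T
    rw [← cfc_const_mul_id (n : ℝ) T]
    refine cfc_mono (fun t ht => ?_) (continuousOn_const.sub (hcont n))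
    have hs : 0 ≤ (n : ℝ) * t := mul_nonneg n.cast_nonneg (hspec t ht)
    have hinv : (1 + n * t)⁻¹ * (1 + n * t) = 1 := inv_mul_cancel₀ (hpos n ht).ne'
    have hle : (1 + n * t)⁻¹ ≤ 1 := inv_le_one_of_one_le₀ (by linarith)
    nlinarith [mul_nonneg hs (sub_nonneg.mpr hle)]
  · have hg (n : ℕ) : g n = 1 - cfc (fun t : ℝ => (1 + n * t)⁻¹) T := by
      rw [← cfc_const_one ℝ T, ← cfc_sub _ _ T continuousOn_const (hcont n)]
    simpa [hg] using (tendsto_cfc_inv_one_add_mul_apply hT hinj x).const_sub x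

lemma absCont_iff_injective_of_isStrictlyPositive {A B : H →L[ℂ] H} (hA : IsStrictlyPositive A)
    (hB : 0 ≤ B) : AbsCont A B ↔ Function.Injective B := by
  refine ⟨fun h => ?_, fun hBinj => ?_⟩
  · have hker : (A : H →ₗ[ℂ] H).ker = ⊥ :=
      LinearMap.ker_eq_bot.mpr (isUnit_iff_bijective.mp hA.isUnit).injective
    exact LinearMap.ker_eq_bot.mp (eq_bot_mono h.ker_le hker)
  set u := (IsStrictlyPositive.isUnit_cfcSqrt A hA).unit
  set v : H →L[ℂ] H := ↑u⁻¹
  have hvu : v * u = 1 := u.inv_mul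
  have hT : 0 ≤ star v * B * v := star_left_conjugate_nonneg hB v
  have hTinj : Function.Injective (star v * B * v) :=
    ((isUnit_iff_bijective.mp u⁻¹.isUnit.star).injective.comp hBinj).comp
      (isUnit_iff_bijective.mp u⁻¹.isUnit).injective
  have hsqrt : star (u : H →L[ℂ] H) * u = A := by
    rw [IsUnit.unit_spec, (IsSelfAdjoint.of_nonneg (CFC.sqrt_nonneg A)).star_eq]
    exact CFC.sqrt_mul_sqrt_self A hA.nonneg
  convert (absCont_one_of_injective hT hTinj).star_left_conjugate u using 1
  · rw [mul_one, hsqrt]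
  · rw [show star (u : H →L[ℂ] H) * (star v * B * v) * u = star (v * u) * B * (v * u) by
      rw [star_mul]; noncomm_ring, hvu, star_one, one_mul, mul_one]

theorem stmt19_general (φ : (H →L[ℂ] H) → (H →L[ℂ] H))
    (hfix : ∀ A : H →L[ℂ] H, A.IsPositive → ¬ IsUnit A → φ A = A)
    (honto : φ '' {A : H →L[ℂ] H | A.IsPositive ∧ IsUnit A} =
      {A : H →L[ℂ] H | A.IsPositive ∧ IsUnit A}) :
    ∀ A B : H →L[ℂ] H, A.IsPositive → B.IsPositive →
      (AbsCont A B ↔ AbsCont (φ A) (φ B)) := by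
  have hunit (X : H →L[ℂ] H) (hX : X.IsPositive) (hU : IsUnit X) :
      IsStrictlyPositive (φ X) := by
    obtain ⟨hpos, hU'⟩ : φ X ∈ {A : H →L[ℂ] H | A.IsPositive ∧ IsUnit A} :=
      honto ▸ Set.mem_image_of_mem φ ⟨hX, hU⟩
    exact hU'.isStrictlyPositive ((nonneg_iff_isPositive _).mpr hpos)
  intro A B hA hB
  have hA0 := (nonneg_iff_isPositive A).mpr hA
  have hB0 := (nonneg_iff_isPositive B).mpr hB
  by_cases hUB : IsUnit B
  · have hφA : 0 ≤ φ A := by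
      by_cases hUA : IsUnit A
      · exact (hunit A hA hUA).nonneg
      · rwa [hfix A hA hUA]
    exact iff_of_true (absCont_of_isStrictlyPositive_right hA0 (hUB.isStrictlyPositive hB0))
      (absCont_of_isStrictlyPositive_right hφA (hunit B hB hUB))
  rw [hfix B hB hUB]
  by_cases hUA : IsUnit A
  · rw [absCont_iff_injective_of_isStrictlyPositive (hUA.isStrictlyPositive hA0) hB0,
      absCont_iff_injective_of_isStrictlyPositive (hunit A hA hUA) hB0]
  · rw [hfix A hA hUA]

/-- A bijection of the positive cone fixing every non-invertible positive
operator and mapping the set of invertible positive operators onto itself preserves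
absolute continuity in both directions. -/
theorem stmt19 (φ : (H →L[ℂ] H) → (H →L[ℂ] H))
    (hbij : Set.BijOn φ {A | A.IsPositive} {A | A.IsPositive})
    (hfix : ∀ A : H →L[ℂ] H, A.IsPositive → ¬ IsUnit A → φ A = A)
    (honto : φ '' {A : H →L[ℂ] H | A.IsPositive ∧ IsUnit A} =
      {A : H →L[ℂ] H | A.IsPositive ∧ IsUnit A}) :
    ∀ A B : H →L[ℂ] H, A.IsPositive → B.IsPositive →
      (AbsCont A B ↔ AbsCont (φ A) (φ B)) :=
  stmt19_general φ hfix honto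
end
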